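/- Let (A, 𝒜) and (B, ℬ) be measurable spaces, let r be a σ-finite measure on A × B, and let ν, μ be probability measures on A and B respectively. Suppose π* is a probability measure on A × B with first marginal ν and second marginal μ, absolutely continuous with respect to r, whose Radon–Nikodym derivative factorizes as dπ*/dr(z,x) = exp(f(z) + g(x)) r-a.e. for measurable functions f : A → ℝ and g : B → ℝ with f ν-integrable and g μ-integrable. Then for every coupling π of (ν, μ) the Pythagorean identity D_KL(π ‖ r) = D_KL(π ‖ π*) + D_KL(π* ‖ r) holds, with D_KL(π* ‖ r) = ∫ f dν + ∫ g dμ. Consequently π* minimizes D_KL(· ‖ r) over all couplings of (ν, μ), and it is the unique minimizer among couplings π with D_KL(π ‖ r) < ∞. -/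
import Mathlib


open MeasureTheory
open scoped Classical

open scoped ENNReal NNReal

/-- The Kullback–Leibler divergence: `∫ log (dP/dQ) dP` when `P ≪ Q` and the
log-likelihood ratio is `P`-integrable, and `⊤` otherwise. -/
noncomputable def klDiv {α : Type*} [MeasurableSpace α] (P Q : Measure α) : EReal :=
  if P ≪ Q ∧ Integrable (llr P Q) P then ((∫ x, llr P Q x ∂P : ℝ) : EReal) else ⊤

lemma gibbs_aux {α : Type*} [MeasurableSpace α] (P Q : Measure α)
    [IsProbabilityMeasure P] [IsProbabilityMeasure Q]
    (hPQ : P ≪ Q) (hint : Integrable (llr P Q) P) :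
    0 ≤ ∫ x, llr P Q x ∂P ∧ (∫ x, llr P Q x ∂P ≤ 0 → P = Q) := by
  set ρ : α → ℝ≥0∞ := P.rnDeriv Q with hρ
  have hρm : Measurable ρ := Measure.measurable_rnDeriv P Q
  have hpos : ∀ᵐ x ∂P, 0 < ρ x := Measure.rnDeriv_pos hPQ
  have hlt : ∀ᵐ x ∂P, ρ x < ⊤ := hPQ.ae_le (Measure.rnDeriv_lt_top P Q)
  set w : α → ℝ := fun x => ((ρ x).toReal)⁻¹ with hw
  have hwm : Measurable w := hρm.ennreal_toReal.inv
  have hwnn : ∀ x, 0 ≤ w x := fun x => inv_nonneg.2 ENNReal.toReal_nonneg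
  have hQden : Q.withDensity ρ = P := Measure.withDensity_rnDeriv_eq P Q hPQ
  have hlint : ∫⁻ x, ENNReal.ofReal (w x) ∂P ≤ 1 := by
    rw [← hQden, lintegral_withDensity_eq_lintegral_mul Q hρm
      (by exact hwm.ennreal_ofReal)]
    have hb : ∀ᵐ x ∂Q, (ρ * fun x => ENNReal.ofReal (w x)) x ≤ 1 := by
      filter_upwards [Measure.rnDeriv_lt_top P Q] with x hx
      simp only [Pi.mul_apply]
      by_cases h0 : ρ x = 0
      · simp [hw, h0]
      · have hofw : ENNReal.ofReal (w x) = (ρ x)⁻¹ := by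
          show ENNReal.ofReal ((ρ x).toReal⁻¹) = (ρ x)⁻¹
          rw [← ENNReal.toReal_inv, ENNReal.ofReal_toReal (by simp [h0])]
        rw [hofw, ENNReal.mul_inv_cancel h0 hx.ne]
    calc ∫⁻ x, (ρ * fun x => ENNReal.ofReal (w x)) x ∂Q
        ≤ ∫⁻ _, 1 ∂Q := lintegral_mono_ae hb
      _ = 1 := by simp
  have hwint : Integrable w P := by
    refine ⟨hwm.aestronglyMeasurable, ?_⟩
    rw [hasFiniteIntegral_iff_ofReal (Filter.Eventually.of_forall hwnn)]
    exact lt_of_le_of_lt hlint ENNReal.one_lt_top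
  have hwle : ∫ x, w x ∂P ≤ 1 := by
    rw [integral_eq_lintegral_of_nonneg_ae (Filter.Eventually.of_forall hwnn)
      hwm.aestronglyMeasurable]
    calc (∫⁻ x, ENNReal.ofReal (w x) ∂P).toReal
        ≤ (1 : ℝ≥0∞).toReal := ENNReal.toReal_mono (by simp) hlint
      _ = 1 := by simp
  have hpt : ∀ᵐ x ∂P, 1 - w x ≤ llr P Q x := by
    filter_upwards [hpos, hlt] with x h0 ht
    have htr : 0 < (ρ x).toReal := ENNReal.toReal_pos h0.ne' ht.ne
    have hl := Real.log_le_sub_one_of_pos (inv_pos.2 htr)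
    rw [Real.log_inv] at hl
    have hllr : llr P Q x = Real.log (ρ x).toReal := rfl
    rw [hllr, hw]
    linarith
  have hg0 : Integrable (fun x => 1 - w x) P := (integrable_const 1).sub hwint
  have h2 : ∫ x, (1 - w x) ∂P = 1 - ∫ x, w x ∂P := by
    rw [integral_sub (integrable_const 1) hwint]; simp
  have h1 : ∫ x, (1 - w x) ∂P ≤ ∫ x, llr P Q x ∂P :=
    integral_mono_ae hg0 hint hpt
  have hnn : 0 ≤ ∫ x, llr P Q x ∂P := by rw [h2] at h1; linarith
  refine ⟨hnn, fun hle => ?_⟩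
  have hnn2 : 0 ≤ᵐ[P] fun x => llr P Q x - (1 - w x) := by
    filter_upwards [hpt] with x hx
    simp only [Pi.zero_apply]; linarith
  have hg1 : Integrable (fun x => 1 - w x) P := (integrable_const 1).sub hwint
  have hintd : Integrable (fun x => llr P Q x - (1 - w x)) P := hint.sub hg1
  have hizero : ∫ x, (llr P Q x - (1 - w x)) ∂P = 0 := by
    have hge := integral_nonneg_of_ae hnn2
    have heq : ∫ x, (llr P Q x - (1 - w x)) ∂P
        = ∫ x, llr P Q x ∂P - (1 - ∫ x, w x ∂P) := by
      rw [integral_sub hint hg1, h2]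
    rw [heq] at hge ⊢
    linarith
  have hzero : ∀ᵐ x ∂P, llr P Q x - (1 - w x) = 0 := by
    have := (integral_eq_zero_iff_of_nonneg_ae hnn2 hintd).mp hizero
    filter_upwards [this] with x hx using hx
  have hone : ∀ᵐ x ∂P, ρ x = 1 := by
    filter_upwards [hzero, hpos, hlt] with x hx h0 ht
    have htr : 0 < (ρ x).toReal := ENNReal.toReal_pos h0.ne' ht.ne
    by_contra hne
    have htne : (ρ x).toReal ≠ 1 := by
      intro h
      exact hne (by rw [← ENNReal.ofReal_toReal ht.ne, h]; simp)
    have hinvne : ((ρ x).toReal)⁻¹ ≠ 1 := by simpa [inv_eq_one] using htne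
    have hs := Real.log_lt_sub_one_of_pos (inv_pos.2 htr) hinvne
    rw [Real.log_inv] at hs
    have hllr : llr P Q x = Real.log (ρ x).toReal := rfl
    rw [hllr, hw] at hx
    linarith
  have hNm : MeasurableSet {y | ρ y ≠ 1} := (hρm (measurableSet_singleton 1)).compl
  have hN : P {y | ρ y ≠ 1} = 0 := by
    rw [ae_iff] at hone
    exact hone
  have h0N : ∀ᵐ x ∂Q, x ∈ {y | ρ y ≠ 1} → ρ x = 0 := by
    have hz : ∫⁻ x in {y | ρ y ≠ 1}, ρ x ∂Q = 0 := by
      rw [← hQden, withDensity_apply _ hNm] at hN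
      exact hN
    exact (setLIntegral_eq_zero_iff hNm hρm).mp hz
  have hSm : MeasurableSet {y | ρ y = 1} := hρm (measurableSet_singleton 1)
  have hSind : ρ =ᵐ[Q] Set.indicator {y | ρ y = 1} (fun _ => 1) := by
    filter_upwards [h0N] with x hx
    by_cases h1 : x ∈ {y | ρ y = 1}
    · rw [Set.indicator_of_mem h1]
      exact h1
    · rw [Set.indicator_of_notMem h1]
      exact hx h1
  have hQS : Q {y | ρ y = 1} = 1 := by
    have hint1 : ∫⁻ x, ρ x ∂Q = Q {y | ρ y = 1} := by
      rw [lintegral_congr_ae hSind, lintegral_indicator hSm _]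
      simp
    rw [← hint1, Measure.lintegral_rnDeriv hPQ, measure_univ]
  have honeQ : ρ =ᵐ[Q] fun _ => 1 := by
    have hcompl : Q {y | ρ y = 1}ᶜ = 0 := by
      rw [measure_compl hSm (measure_ne_top _ _), hQS, measure_univ, tsub_self]
    filter_upwards [measure_eq_zero_iff_ae_notMem.mp hcompl] with x hx
    simpa using hx
  calc P = Q.withDensity ρ := hQden.symm
    _ = Q.withDensity (fun _ => 1) := withDensity_congr_ae honeQ
    _ = Q := by simp [withDensity_one]

lemma klDiv_of {α : Type*} [MeasurableSpace α] {P Q : Measure α}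
    (h1 : P ≪ Q) (h2 : Integrable (llr P Q) P) :
    klDiv P Q = ((∫ x, llr P Q x ∂P : ℝ) : EReal) := if_pos ⟨h1, h2⟩

lemma klDiv_top_of {α : Type*} [MeasurableSpace α] {P Q : Measure α}
    (h : ¬ (P ≪ Q ∧ Integrable (llr P Q) P)) : klDiv P Q = ⊤ := if_neg h

lemma coupling_int {A B : Type*} [MeasurableSpace A] [MeasurableSpace B]
    (π : Measure (A × B)) (ν : Measure A) (μ : Measure B)
    (hfst : π.map Prod.fst = ν) (hsnd : π.map Prod.snd = μ)
    (f : A → ℝ) (g : B → ℝ) (hf : Measurable f) (hg : Measurable g)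
    (hfi : Integrable f ν) (hgi : Integrable g μ) :
    Integrable (fun p => f p.1 + g p.2) π ∧
      ∫ p, (f p.1 + g p.2) ∂π = ∫ z, f z ∂ν + ∫ x, g x ∂μ := by
  subst hfst hsnd
  have hif : Integrable (fun p : A × B => f p.1) π :=
    (integrable_map_measure hf.aestronglyMeasurable measurable_fst.aemeasurable).mp hfi
  have hig : Integrable (fun p : A × B => g p.2) π :=
    (integrable_map_measure hg.aestronglyMeasurable measurable_snd.aemeasurable).mp hgi
  refine ⟨hif.add hig, ?_⟩
  rw [integral_add hif hig,
    integral_map measurable_fst.aemeasurable hf.aestronglyMeasurable,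
    integral_map measurable_snd.aemeasurable hg.aestronglyMeasurable]

/-- Pythagorean identity for the static Schrödinger bridge: if `π*` is a coupling of
`(ν, μ)` whose density w.r.t. `r` factorizes as `exp (f(z) + g(x))`, then for every
coupling `π` of `(ν, μ)` one has `D_KL(π‖r) = D_KL(π‖π*) + D_KL(π*‖r)`, with
`D_KL(π*‖r) = ∫ f dν + ∫ g dμ`; hence `π*` is the minimizer of `D_KL(·‖r)` over
couplings, unique among couplings of finite divergence. -/
theorem stmt1 {A B : Type*} [MeasurableSpace A] [MeasurableSpace B]
    (r : Measure (A × B)) [SigmaFinite r]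
    (ν : Measure A) (μ : Measure B) [IsProbabilityMeasure ν] [IsProbabilityMeasure μ]
    (πs : Measure (A × B)) [IsProbabilityMeasure πs]
    (hfst : πs.map Prod.fst = ν) (hsnd : πs.map Prod.snd = μ)
    (hac : πs ≪ r)
    (f : A → ℝ) (g : B → ℝ) (hf : Measurable f) (hg : Measurable g)
    (hfi : Integrable f ν) (hgi : Integrable g μ)
    (hfact : ∀ᵐ p ∂r, πs.rnDeriv r p = ENNReal.ofReal (Real.exp (f p.1 + g p.2))) :
    (∀ π' : Measure (A × B), IsProbabilityMeasure π' →
        π'.map Prod.fst = ν → π'.map Prod.snd = μ →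
        klDiv π' r = klDiv π' πs + klDiv πs r) ∧
    klDiv πs r = ((∫ z, f z ∂ν + ∫ x, g x ∂μ : ℝ) : EReal) ∧
    (∀ π' : Measure (A × B), IsProbabilityMeasure π' →
        π'.map Prod.fst = ν → π'.map Prod.snd = μ →
        klDiv πs r ≤ klDiv π' r) ∧
    (∀ π' : Measure (A × B), IsProbabilityMeasure π' →
        π'.map Prod.fst = ν → π'.map Prod.snd = μ →
        klDiv π' r ≠ ⊤ → klDiv π' r ≤ klDiv πs r → π' = πs) := by
  -- r is absolutely continuous w.r.t. πs since the density is positive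
  have hrs : r ≪ πs := by
    refine Measure.AbsolutelyContinuous.mk fun s hs hs0 => ?_
    have h1 : ∫⁻ x in s, πs.rnDeriv r x ∂r = 0 := by
      rw [Measure.setLIntegral_rnDeriv hac]
      exact hs0
    have h2 := (setLIntegral_eq_zero_iff hs (Measure.measurable_rnDeriv _ _)).mp h1
    rw [measure_eq_zero_iff_ae_notMem]
    filter_upwards [h2, hfact] with p hp hfp
    intro hps
    have := hp hps
    rw [hfp] at this
    exact absurd this (by simp [Real.exp_pos])
  -- the llr of πs w.r.t. r
  have hllrs : llr πs r =ᵐ[πs] fun p => f p.1 + g p.2 := by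
    filter_upwards [hac.ae_le hfact] with p hp
    have h0 : llr πs r p = Real.log (πs.rnDeriv r p).toReal := rfl
    rw [h0, hp, ENNReal.toReal_ofReal (Real.exp_pos _).le, Real.log_exp]
  obtain ⟨hfgs, hfgs_int⟩ := coupling_int πs ν μ hfst hsnd f g hf hg hfi hgi
  have h_int_s : Integrable (llr πs r) πs := (integrable_congr hllrs).mpr hfgs
  have hkls : klDiv πs r = ((∫ z, f z ∂ν + ∫ x, g x ∂μ : ℝ) : EReal) := by
    rw [klDiv_of hac h_int_s, integral_congr_ae hllrs, hfgs_int]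
  -- decomposition for an arbitrary coupling
  have hdecomp : ∀ π' : Measure (A × B), IsProbabilityMeasure π' →
      π'.map Prod.fst = ν → π'.map Prod.snd = μ →
      klDiv π' r = klDiv π' πs + klDiv πs r := by
    intro π' hP hfst' hsnd'
    obtain ⟨hfg', hfg'_int⟩ := coupling_int π' ν μ hfst' hsnd' f g hf hg hfi hgi
    by_cases hπr : π' ≪ r
    · have hπs : π' ≪ πs := hπr.trans hrs
      have hchain : llr π' r =ᵐ[π'] fun p => llr π' πs p + (f p.1 + g p.2) := by
        filter_upwards [hπr.ae_le (Measure.rnDeriv_mul_rnDeriv hπs),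
          Measure.rnDeriv_pos hπs, hπs.ae_le (Measure.rnDeriv_lt_top π' πs),
          hπr.ae_le hfact] with p hp hpos hlt hfp
        have h1 : llr π' r p = Real.log (π'.rnDeriv r p).toReal := rfl
        have h2 : llr π' πs p = Real.log (π'.rnDeriv πs p).toReal := rfl
        rw [h1, h2, ← hp, Pi.mul_apply, hfp, ENNReal.toReal_mul,
          ENNReal.toReal_ofReal (Real.exp_pos _).le,
          Real.log_mul (by simp [ENNReal.toReal_eq_zero_iff, hpos.ne', hlt.ne])
            (Real.exp_pos _).ne', Real.log_exp]
      by_cases hint' : Integrable (llr π' πs) π'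
      · have hint_r : Integrable (llr π' r) π' :=
          (integrable_congr hchain).mpr (hint'.add hfg')
        rw [klDiv_of hπr hint_r, klDiv_of hπs hint', hkls,
          integral_congr_ae hchain, integral_add hint' hfg', hfg'_int,
          EReal.coe_add]
      · have hint_r : ¬ Integrable (llr π' r) π' := by
          intro hint_r
          apply hint'
          have h3 := ((integrable_congr hchain).mp hint_r).sub hfg'
          refine h3.congr (Filter.Eventually.of_forall fun p => ?_)
          simp only [Pi.sub_apply]
          ring
        rw [klDiv_top_of (fun h => hint_r h.2), klDiv_top_of (fun h => hint' h.2), hkls,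
          EReal.top_add_coe]
    · have hπs : ¬ π' ≪ πs := fun h => hπr (h.trans hac)
      rw [klDiv_top_of (fun h => hπr h.1), klDiv_top_of (fun h => hπs h.1), hkls,
        EReal.top_add_coe]
  refine ⟨hdecomp, hkls, ?_, ?_⟩
  · intro π' hP hfst' hsnd'
    rw [hdecomp π' hP hfst' hsnd', hkls]
    by_cases hπs : π' ≪ πs
    · by_cases hint' : Integrable (llr π' πs) π'
      · have hnn := (gibbs_aux π' πs hπs hint').1
        rw [klDiv_of hπs hint', ← EReal.coe_add]
        exact EReal.coe_le_coe_iff.mpr (by linarith)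
      · rw [klDiv_top_of (fun h => hint' h.2), EReal.top_add_coe]
        exact le_top
    · rw [klDiv_top_of (fun h => hπs h.1), EReal.top_add_coe]
      exact le_top
  · intro π' hP hfst' hsnd' hne hle
    rw [hdecomp π' hP hfst' hsnd', hkls] at hne hle
    by_cases hπs : π' ≪ πs
    · by_cases hint' : Integrable (llr π' πs) π'
      · refine (gibbs_aux π' πs hπs hint').2 ?_
        rw [klDiv_of hπs hint', ← EReal.coe_add] at hle
        have := EReal.coe_le_coe_iff.mp hle
        linarith
      · exact absurd (by rw [klDiv_top_of (fun h => hint' h.2), EReal.top_add_coe]) hne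
    · exact absurd (by rw [klDiv_top_of (fun h => hπs h.1), EReal.top_add_coe]) hne
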